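/- arXiv:1703.04300 — 4 statements merged into one kernel-verified Lean document; each statement's English description precedes it below -/
import Mathlib

section
/- Let ε be a real number with 0 < ε ≤ 1 and let n be a real number with n ≥ 3^(1+1/ε). Then (n/3)^(1-ε²) ≥ n^(1-ε). -/
/-! Since `n ^ (1 - ε²) = n ^ (1 - ε) * n ^ (ε * (1 - ε))` and
`b ^ (1 - ε²) = (b ^ (1 + 1 / ε)) ^ (ε * (1 - ε))`, the claim reduces to the monotonicity of
`x ↦ x ^ (ε * (1 - ε))`, whose exponent is nonnegative exactly when `ε ≤ 1`. -/

open Real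

theorem rpow_one_sub_sq_eq_rpow_one_add_inv_rpow {b ε : ℝ} (hb : 0 ≤ b) (hε : ε ≠ 0) :
    b ^ (1 - ε ^ 2) = (b ^ (1 + 1 / ε)) ^ (ε * (1 - ε)) := by
  rw [← rpow_mul hb]
  congr 1
  field_simp
  ring

theorem rpow_one_sub_le_div_rpow_one_sub_sq {b ε n : ℝ} (hb : 0 < b) (hε : 0 < ε)
    (hε1 : ε ≤ 1) (hn : b ^ (1 + 1 / ε) ≤ n) :
    n ^ (1 - ε) ≤ (n / b) ^ (1 - ε ^ 2) := by
  have hn0 : 0 < n := (rpow_pos_of_pos hb _).trans_le hn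
  have key : b ^ (1 - ε ^ 2) ≤ n ^ (ε * (1 - ε)) := by
    rw [rpow_one_sub_sq_eq_rpow_one_add_inv_rpow hb.le hε.ne']
    exact rpow_le_rpow (by positivity) hn (mul_nonneg hε.le (by linarith))
  rw [div_rpow hn0.le hb.le, le_div_iff₀ (by positivity)]
  calc n ^ (1 - ε) * b ^ (1 - ε ^ 2) ≤ n ^ (1 - ε) * n ^ (ε * (1 - ε)) := by gcongr
    _ = n ^ (1 - ε ^ 2) := by rw [← rpow_add hn0]; ring_nf

/-- Key numerical inequality in Lemma 1: if `0 < ε ≤ 1` and `n ≥ 3^(1+1/ε)`,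
then `(n/3)^(1-ε²) ≥ n^(1-ε)` (real powers). -/
theorem pendant_key_inequality (ε n : ℝ) (hε : 0 < ε) (hε1 : ε ≤ 1)
    (hn : (3 : ℝ) ^ (1 + 1 / ε) ≤ n) :
    (n / 3) ^ (1 - ε ^ 2) ≥ n ^ (1 - ε) :=
  rpow_one_sub_le_div_rpow_one_sub_sq three_pos hε hε1 hn
end

section
/- Let G' be a finite simple graph on vertex set V and let G be its pendant-pair graph. If S ⊆ V is an independent set of G' with |S| = t, then the family of paths {(a_v, v, b_v) : v ∈ S} is a family of t induced disjoint paths in G, where the path indexed by v connects the source-sink pair (a_v, b_v). -/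
open SimpleGraph

variable {V : Type*}

/-- Original vertex `v` inside the pendant-pair graph. -/
def orig (v : V) : V ⊕ (V ⊕ V) := Sum.inl v

/-- First pendant vertex `a_v` attached to `v`. -/
def pA (v : V) : V ⊕ (V ⊕ V) := Sum.inr (Sum.inl v)

/-- Second pendant vertex `b_v` attached to `v`. -/
def pB (v : V) : V ⊕ (V ⊕ V) := Sum.inr (Sum.inr v)

/-- The pendant-pair graph of `G'`: keep all edges of `G'` between original
vertices and attach to every vertex `v` the two pendant vertices `a_v`, `b_v`. -/
def pendantGraph (G' : SimpleGraph V) : SimpleGraph (V ⊕ (V ⊕ V)) :=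
  SimpleGraph.fromRel (fun x y =>
    (∃ u v : V, x = orig u ∧ y = orig v ∧ G'.Adj u v) ∨
    (∃ v : V, x = orig v ∧ (y = pA v ∨ y = pB v)))

lemma pendantGraph_adj_pA (G' : SimpleGraph V) (v : V) :
    (pendantGraph G').Adj (pA v) (orig v) :=
  ⟨by simp [pA, orig], Or.inr (Or.inr ⟨v, rfl, Or.inl rfl⟩)⟩

lemma pendantGraph_adj_pB (G' : SimpleGraph V) (v : V) :
    (pendantGraph G').Adj (orig v) (pB v) :=
  ⟨by simp [pB, orig], Or.inl (Or.inr ⟨v, rfl, Or.inr rfl⟩)⟩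

/-- The canonical path `a_v, v, b_v` in the pendant-pair graph. -/
def pathAVB (G' : SimpleGraph V) (v : V) : (pendantGraph G').Walk (pA v) (pB v) :=
  SimpleGraph.Walk.cons (pendantGraph_adj_pA G' v)
    (SimpleGraph.Walk.cons (pendantGraph_adj_pB G' v) SimpleGraph.Walk.nil)

/-- A walk is an induced path if it is a path and the only edges of the graph
between its vertices are its own edges. -/
def IsInducedPathW {α : Type*} (G : SimpleGraph α) {u v : α} (p : G.Walk u v) : Prop :=
  p.IsPath ∧ ∀ x ∈ p.support, ∀ y ∈ p.support, G.Adj x y → s(x, y) ∈ p.edges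

/-- Two walks are totally disjoint if they share no vertex and no vertex of one
is adjacent to a vertex of the other. -/
def WalksFarApart {α : Type*} (G : SimpleGraph α) {u v w z : α}
    (p : G.Walk u v) (q : G.Walk w z) : Prop :=
  ∀ x ∈ p.support, ∀ y ∈ q.support, x ≠ y ∧ ¬ G.Adj x y

/-! A pendant vertex `a_v` or `b_v` is adjacent to `v` only, so the only edges among the vertices
of the paths `a_v, v, b_v` are the path edges themselves and the `G'`-edges between their
middle vertices, which independence of `S` rules out. -/

section PendantGraph

variable (G' : SimpleGraph V) {u v : V} {x : V ⊕ (V ⊕ V)}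

@[simp]
lemma pendantGraph_orig_adj_orig_iff :
    (pendantGraph G').Adj (orig u) (orig v) ↔ G'.Adj u v := by
  simp only [pendantGraph, fromRel_adj, orig, pA, pB, ne_eq, Sum.inl.injEq, reduceCtorEq,
    or_false, exists_and_left, exists_eq_left']
  exact ⟨fun h => h.2.elim id G'.adj_symm, fun h => ⟨h.ne, Or.inl h⟩⟩

@[simp]
lemma pendantGraph_pA_adj_iff : (pendantGraph G').Adj (pA u) x ↔ x = orig u := by
  cases x <;> simp [pendantGraph, orig, pA, pB, eq_comm]

@[simp]
lemma pendantGraph_adj_pA_iff : (pendantGraph G').Adj x (pA u) ↔ x = orig u := by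
  rw [adj_comm, pendantGraph_pA_adj_iff]

@[simp]
lemma pendantGraph_pB_adj_iff : (pendantGraph G').Adj (pB u) x ↔ x = orig u := by
  cases x <;> simp [pendantGraph, orig, pA, pB, eq_comm]

@[simp]
lemma pendantGraph_adj_pB_iff : (pendantGraph G').Adj x (pB u) ↔ x = orig u := by
  rw [adj_comm, pendantGraph_pB_adj_iff]

lemma support_pathAVB : (pathAVB G' v).support = [pA v, orig v, pB v] := rfl

lemma edges_pathAVB : (pathAVB G' v).edges = [s(pA v, orig v), s(orig v, pB v)] := rfl

lemma pathAVB_isInducedPath : IsInducedPathW (pendantGraph G') (pathAVB G' v) := by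
  refine ⟨?_, ?_⟩
  · rw [Walk.isPath_def, support_pathAVB]
    simp [orig, pA, pB]
  · simp only [support_pathAVB, edges_pathAVB, List.mem_cons, List.not_mem_nil, or_false]
    rintro x (rfl | rfl | rfl) y (rfl | rfl | rfl) hadj <;> simp at hadj ⊢ <;>
      simp [orig, pA, pB] at hadj

lemma pathAVB_walksFarApart (hne : u ≠ v) (hadj : ¬ G'.Adj u v) :
    WalksFarApart (pendantGraph G') (pathAVB G' u) (pathAVB G' v) := by
  simp only [WalksFarApart, support_pathAVB, List.mem_cons, List.not_mem_nil, or_false]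
  rintro x (rfl | rfl | rfl) y (rfl | rfl | rfl) <;> simp [hadj] <;>
    simp [orig, pA, pB, hne, hne.symm]

end PendantGraph

theorem indepSet_gives_inducedDisjointPaths_general
    (G' : SimpleGraph V) (S : Finset V)
    (hS : ∀ u ∈ S, ∀ v ∈ S, ¬ G'.Adj u v) :
    (∀ v ∈ S, IsInducedPathW (pendantGraph G') (pathAVB G' v)) ∧
    (∀ u ∈ S, ∀ v ∈ S, u ≠ v →
      WalksFarApart (pendantGraph G') (pathAVB G' u) (pathAVB G' v)) :=
  ⟨fun _ _ => pathAVB_isInducedPath G',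
    fun u hu v hv hne => pathAVB_walksFarApart G' hne (hS u hu v hv)⟩

/-- If `S` is an independent set of `G'` of size `t`, then the `t` paths
`a_v, v, b_v` for `v ∈ S` form a family of induced disjoint paths in the
pendant-pair graph, the path indexed by `v` connecting the pair `(a_v, b_v)`. -/
theorem indepSet_gives_inducedDisjointPaths [Fintype V] [DecidableEq V]
    (G' : SimpleGraph V) (S : Finset V) (t : ℕ) (hcard : S.card = t)
    (hS : ∀ u ∈ S, ∀ v ∈ S, ¬ G'.Adj u v) :
    (∀ v ∈ S, IsInducedPathW (pendantGraph G') (pathAVB G' v)) ∧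
    (∀ u ∈ S, ∀ v ∈ S, u ≠ v →
      WalksFarApart (pendantGraph G') (pathAVB G' u) (pathAVB G' v)) :=
  indepSet_gives_inducedDisjointPaths_general G' S hS
end

section
/- Let G' be a finite simple graph on vertex set V and let G be its pendant-pair graph. Suppose S ⊆ V and for each v ∈ S there is a path P_v in G from a_v to b_v such that the family (P_v)_{v ∈ S} is a family of induced disjoint paths. Then S is an independent set of G'. -/
open SimpleGraph

variable {V : Type*}

/-!
`a_v` is a leaf whose only neighbour is `v`, so every path from `a_v` to `b_v` passes
through `v`. If `u, v ∈ S` were adjacent in `G'`, then `u ∈ P_u` and `v ∈ P_v` would be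
adjacent in the pendant-pair graph, contradicting that the paths are far apart.
-/

lemma pendantGraph_adj_orig {G' : SimpleGraph V} {u v : V} (h : G'.Adj u v) :
    (pendantGraph G').Adj (orig u) (orig v) :=
  ⟨by simpa [orig] using h.ne, Or.inl (Or.inl ⟨u, v, rfl, rfl, h⟩)⟩

lemma eq_orig_of_pendantGraph_adj_pA {G' : SimpleGraph V} {v : V} {y : V ⊕ (V ⊕ V)}
    (h : (pendantGraph G').Adj (pA v) y) : y = orig v := by
  obtain ⟨-, (⟨u, w, hx, -, -⟩ | ⟨u, hx, -⟩) | (⟨u, w, -, hy, -⟩ | ⟨u, hy, hx | hx⟩)⟩ := h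
  all_goals simp_all [orig, pA, pB]

lemma orig_mem_support_of_walk_pA {G' : SimpleGraph V} {v : V} {w : V ⊕ (V ⊕ V)}
    (p : (pendantGraph G').Walk (pA v) w) (hw : w ≠ pA v) : orig v ∈ p.support := by
  cases p with
  | nil => exact absurd rfl hw
  | cons h q =>
    obtain rfl := eq_orig_of_pendantGraph_adj_pA h
    simp

lemma orig_mem_support_of_walk_pA_pB {G' : SimpleGraph V} {v : V}
    (p : (pendantGraph G').Walk (pA v) (pB v)) : orig v ∈ p.support :=
  orig_mem_support_of_walk_pA p (by simp [pA, pB])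

theorem inducedDisjointPaths_gives_indepSet_general
    (G' : SimpleGraph V) (S : Set V)
    (P : ∀ v ∈ S, (pendantGraph G').Walk (pA v) (pB v))
    (hdisj : ∀ u v (hu : u ∈ S) (hv : v ∈ S), u ≠ v →
      WalksFarApart (pendantGraph G') (P u hu) (P v hv)) :
    ∀ u ∈ S, ∀ v ∈ S, ¬ G'.Adj u v := by
  intro u hu v hv hadj
  have hfar := hdisj u v hu hv hadj.ne (orig u) (orig_mem_support_of_walk_pA_pB _)
    (orig v) (orig_mem_support_of_walk_pA_pB _)
  exact hfar.2 (pendantGraph_adj_orig hadj)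

/-- If for each `v ∈ S` there is a path `P v` from `a_v` to `b_v` in the
pendant-pair graph such that the family is a family of induced disjoint paths,
then `S` is an independent set of `G'`. -/
theorem inducedDisjointPaths_gives_indepSet [Fintype V]
    (G' : SimpleGraph V) (S : Set V)
    (P : ∀ v ∈ S, (pendantGraph G').Walk (pA v) (pB v))
    (hind : ∀ v (hv : v ∈ S), IsInducedPathW (pendantGraph G') (P v hv))
    (hdisj : ∀ u v (hu : u ∈ S) (hv : v ∈ S), u ≠ v →
      WalksFarApart (pendantGraph G') (P u hu) (P v hv)) :
    ∀ u ∈ S, ∀ v ∈ S, ¬ G'.Adj u v :=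
  inducedDisjointPaths_gives_indepSet_general G' S P hdisj
end

section
/- Let G be a finite simple graph and let S(G) be its subdivision graph. If P_1, …, P_t are pairwise vertex-disjoint paths in G, where P_i connects s_i to t_i, then the subdivided paths P_1', …, P_t' form a family of induced disjoint paths in S(G), where P_i' connects s_i to t_i, and P_i' is obtained from P_i by inserting between each pair of consecutive vertices u, w of P_i the subdivision vertex of the edge {u, w}. -/
/-!
Every vertex of `S(G)` stands for one or two vertices of `G` (itself, or the ends of the edge it
subdivides), and two vertices of `S(G)` that are equal or adjacent stand for a common vertex of
`G`; so subdivided paths of vertex-disjoint paths are far apart. A subdivided path is induced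
because `S(G)` only joins a vertex to a subdivision vertex, and a subdivision vertex on the path
sits between its two ends.
-/

open SimpleGraph

variable {V : Type*}

/-- The subdivision graph of `G`: vertices are the vertices of `G` together
with one subdivision vertex for each edge, and the edges join each edge's
subdivision vertex to its two endpoints. -/
def subdivisionGraph (G : SimpleGraph V) : SimpleGraph (V ⊕ G.edgeSet) :=
  SimpleGraph.fromRel (fun x y =>
    ∃ (v : V) (e : G.edgeSet), x = Sum.inl v ∧ y = Sum.inr e ∧ v ∈ (e : Sym2 V))

lemma subdivisionGraph_adj_left (G : SimpleGraph V) {u x : V} (h : G.Adj u x) :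
    (subdivisionGraph G).Adj (Sum.inl u) (Sum.inr ⟨s(u, x), h⟩) :=
  ⟨by simp, Or.inl ⟨u, ⟨s(u, x), h⟩, rfl, rfl, Sym2.mem_mk_left u x⟩⟩

lemma subdivisionGraph_adj_right (G : SimpleGraph V) {u x : V} (h : G.Adj u x) :
    (subdivisionGraph G).Adj (Sum.inr ⟨s(u, x), h⟩) (Sum.inl x) :=
  ⟨by simp, Or.inr ⟨x, ⟨s(u, x), h⟩, rfl, rfl, Sym2.mem_mk_right u x⟩⟩

/-- The subdivision of a walk: between each pair of consecutive vertices `u, w`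
insert the subdivision vertex of the edge `{u, w}`. -/
def subdivideWalk (G : SimpleGraph V) :
    ∀ {u w : V}, G.Walk u w → (subdivisionGraph G).Walk (Sum.inl u) (Sum.inl w)
  | _, _, SimpleGraph.Walk.nil => SimpleGraph.Walk.nil
  | _, _, SimpleGraph.Walk.cons h p =>
      SimpleGraph.Walk.cons (subdivisionGraph_adj_left G h)
        (SimpleGraph.Walk.cons (subdivisionGraph_adj_right G h) (subdivideWalk G p))

section Subdivision

variable {G : SimpleGraph V}

lemma subdivisionGraph_adj_iff {x y : V ⊕ G.edgeSet} :
    (subdivisionGraph G).Adj x y ↔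
      ∃ (v : V) (e : G.edgeSet), v ∈ (e : Sym2 V) ∧
        (x = Sum.inl v ∧ y = Sum.inr e ∨ x = Sum.inr e ∧ y = Sum.inl v) := by
  simp only [subdivisionGraph, fromRel_adj]
  constructor
  · rintro ⟨-, ⟨v, e, rfl, rfl, hve⟩ | ⟨v, e, rfl, rfl, hve⟩⟩
    exacts [⟨v, e, hve, .inl ⟨rfl, rfl⟩⟩, ⟨v, e, hve, .inr ⟨rfl, rfl⟩⟩]
  · rintro ⟨v, e, hve, ⟨rfl, rfl⟩ | ⟨rfl, rfl⟩⟩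
    exacts [⟨by simp, .inl ⟨v, e, rfl, rfl, hve⟩⟩,
      ⟨by simp, .inr ⟨v, e, rfl, rfl, hve⟩⟩]

/-- A vertex `v` of `G` is sent to the loop `s(v, v)` and a subdivision vertex to its edge, so
that `w ∈ footprint x` says that `w` is `x` or an endpoint of the edge that `x` subdivides. -/
def footprint : V ⊕ G.edgeSet → Sym2 V :=
  Sum.elim Sym2.diag Subtype.val

lemma exists_mem_footprint (x : V ⊕ G.edgeSet) : ∃ v, v ∈ footprint x :=
  ⟨_, Sym2.out_fst_mem _⟩

lemma exists_mem_footprint_of_adj {x y : V ⊕ G.edgeSet} (h : (subdivisionGraph G).Adj x y) :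
    ∃ v, v ∈ footprint x ∧ v ∈ footprint y := by
  obtain ⟨v, e, hve, ⟨rfl, rfl⟩ | ⟨rfl, rfl⟩⟩ := subdivisionGraph_adj_iff.mp h <;>
    exact ⟨v, by simp [footprint, Sym2.diag, hve]⟩

variable {u w : V}

@[simp]
lemma inl_mem_support_subdivideWalk {p : G.Walk u w} {v : V} :
    Sum.inl v ∈ (subdivideWalk G p).support ↔ v ∈ p.support := by
  induction p with
  | nil => simp [subdivideWalk]
  | cons h p ih => simp [subdivideWalk, ih]

@[simp]
lemma inr_mem_support_subdivideWalk {p : G.Walk u w} {e : G.edgeSet} :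
    Sum.inr e ∈ (subdivideWalk G p).support ↔ (e : Sym2 V) ∈ p.edges := by
  induction p with
  | nil => simp [subdivideWalk]
  | cons h p ih => simp [subdivideWalk, ih, Subtype.ext_iff]

lemma inl_inr_mem_edges_subdivideWalk {p : G.Walk u w} {v : V} {e : G.edgeSet}
    (he : (e : Sym2 V) ∈ p.edges) (hve : v ∈ (e : Sym2 V)) :
    s(Sum.inl v, Sum.inr e) ∈ (subdivideWalk G p).edges := by
  induction p with
  | nil => simp at he
  | cons h p ih =>
    simp only [subdivideWalk, Walk.edges_cons, List.mem_cons] at he ⊢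
    rcases he with he | he
    · obtain rfl : e = ⟨_, h⟩ := Subtype.ext he
      rcases Sym2.mem_iff.mp hve with rfl | rfl
      · exact .inl rfl
      · exact .inr (.inl Sym2.eq_swap)
    · exact .inr (.inr (ih he))

lemma mem_support_of_mem_support_subdivideWalk {p : G.Walk u w} {x : V ⊕ G.edgeSet} {v : V}
    (hx : x ∈ (subdivideWalk G p).support) (hv : v ∈ footprint x) : v ∈ p.support := by
  rcases x with x | e
  · obtain rfl : v = x := by simpa [footprint, Sym2.diag] using hv
    simpa using hx
  · exact Walk.mem_support_of_mem_edges (e := (e : Sym2 V)) (by simpa using hx) hv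

lemma SimpleGraph.Walk.IsPath.subdivideWalk {p : G.Walk u w} (hp : p.IsPath) :
    (subdivideWalk G p).IsPath := by
  induction p with
  | nil => exact .nil
  | cons h p ih =>
    obtain ⟨hp, hfresh⟩ := Walk.cons_isPath_iff _ _ |>.mp hp
    rw [Walk.isPath_def]
    simp only [_root_.subdivideWalk, Walk.support_cons, List.nodup_cons, List.mem_cons,
      inl_mem_support_subdivideWalk, inr_mem_support_subdivideWalk]
    exact ⟨by simpa using hfresh, fun he => hfresh (p.fst_mem_support_of_mem_edges he),
      (ih hp).support_nodup⟩

lemma isInducedPathW_subdivideWalk {p : G.Walk u w} (hp : p.IsPath) :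
    IsInducedPathW (subdivisionGraph G) (subdivideWalk G p) := by
  refine ⟨hp.subdivideWalk, fun x hx y hy hxy => ?_⟩
  obtain ⟨v, e, hve, ⟨rfl, rfl⟩ | ⟨rfl, rfl⟩⟩ := subdivisionGraph_adj_iff.mp hxy
  · exact inl_inr_mem_edges_subdivideWalk (by simpa using hy) hve
  · rw [Sym2.eq_swap]
    exact inl_inr_mem_edges_subdivideWalk (by simpa using hx) hve

lemma walksFarApart_subdivideWalk {u' w' : V} {p : G.Walk u w} {q : G.Walk u' w'}
    (hpq : ∀ v ∈ p.support, v ∉ q.support) :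
    WalksFarApart (subdivisionGraph G) (subdivideWalk G p) (subdivideWalk G q) := by
  intro x hx y hy
  have shared (v : V) (hvx : v ∈ footprint x) (hvy : v ∈ footprint y) : False :=
    hpq v (mem_support_of_mem_support_subdivideWalk hx hvx)
      (mem_support_of_mem_support_subdivideWalk hy hvy)
  refine ⟨fun hxy => ?_, fun hxy => ?_⟩
  · obtain ⟨v, hv⟩ := exists_mem_footprint x
    exact shared v hv (hxy ▸ hv)
  · obtain ⟨v, hvx, hvy⟩ := exists_mem_footprint_of_adj hxy
    exact shared v hvx hvy

end Subdivision

theorem subdivide_disjoint_paths_induced_general (G : SimpleGraph V)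
    (t : ℕ) (s t' : Fin t → V) (P : ∀ i, G.Walk (s i) (t' i))
    (hpath : ∀ i, (P i).IsPath)
    (hdisj : ∀ i j, i ≠ j → ∀ x ∈ (P i).support, x ∉ (P j).support) :
    (∀ i, IsInducedPathW (subdivisionGraph G) (subdivideWalk G (P i))) ∧
    ∀ i j, i ≠ j →
      WalksFarApart (subdivisionGraph G) (subdivideWalk G (P i)) (subdivideWalk G (P j)) :=
  ⟨fun i => isInducedPathW_subdivideWalk (hpath i),
    fun i j hij => walksFarApart_subdivideWalk (hdisj i j hij)⟩

/-- If `P_1, …, P_t` are pairwise vertex-disjoint paths in `G`, with `P_i`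
connecting `s i` to `t' i`, then the subdivided paths form a family of induced
disjoint paths in the subdivision graph, the `i`-th connecting `s i` to `t' i`. -/
theorem subdivide_disjoint_paths_induced [Fintype V] (G : SimpleGraph V)
    (t : ℕ) (s t' : Fin t → V) (P : ∀ i, G.Walk (s i) (t' i))
    (hpath : ∀ i, (P i).IsPath)
    (hdisj : ∀ i j, i ≠ j → ∀ x ∈ (P i).support, x ∉ (P j).support) :
    (∀ i, IsInducedPathW (subdivisionGraph G) (subdivideWalk G (P i))) ∧
    ∀ i j, i ≠ j →
      WalksFarApart (subdivisionGraph G) (subdivideWalk G (P i)) (subdivideWalk G (P j)) :=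
  subdivide_disjoint_paths_induced_general G t s t' P hpath hdisj
end
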